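/- arXiv:1704.08835 — 7 statements merged into one kernel-verified Lean document; each statement's English description precedes it below -/
import Mathlib

section
/- Let G be a finite simple graph and let M be a maximal matching of G such that G contains no augmenting path of length 3 with respect to M. Then for every matching M' of G, 2|M'| ≤ 3|M|. -/
/-- `M` is a matching of `G`: a set of edges of `G` that are pairwise disjoint
(no two distinct edges share an endpoint). -/
def IsMatching {V : Type*} (G : SimpleGraph V) (M : Finset (Sym2 V)) : Prop :=
  (∀ e ∈ M, e ∈ G.edgeSet) ∧
  ∀ e ∈ M, ∀ f ∈ M, e ≠ f → ∀ v : V, v ∈ e → v ∉ f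

/-- `M` is a maximal matching of `G`: a matching such that every edge of `G`
shares an endpoint with some edge of `M`. -/
def IsMaximalMatching {V : Type*} (G : SimpleGraph V) (M : Finset (Sym2 V)) : Prop :=
  IsMatching G M ∧ ∀ e ∈ G.edgeSet, ∃ f ∈ M, ∃ v : V, v ∈ e ∧ v ∈ f

/-- `G` contains an augmenting path of length 3 with respect to the matching `M`:
four distinct vertices `x, u, v, y` forming a path `x-u-v-y` in `G`, whose middle
edge `uv` belongs to `M`, whose outer edges do not belong to `M`, and whose
endpoints `x` and `y` are not incident to any edge of `M`. -/
def HasAugmentingPath3 {V : Type*} (G : SimpleGraph V) (M : Finset (Sym2 V)) : Prop :=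
  ∃ x u v y : V, List.Nodup [x, u, v, y] ∧
    G.Adj x u ∧ G.Adj u v ∧ G.Adj v y ∧
    s(u, v) ∈ M ∧ s(x, u) ∉ M ∧ s(v, y) ∉ M ∧
    (∀ f ∈ M, x ∉ f) ∧ (∀ f ∈ M, y ∉ f)

section AuxLemmas

set_option linter.unusedSectionVars false
variable {V : Type*} [Fintype V] [DecidableEq V]

lemma card_filter_touch_le_two (S : Finset (Sym2 V))
    (hdisj : ∀ e ∈ S, ∀ f ∈ S, e ≠ f → ∀ v : V, v ∈ e → v ∉ f)
    (a b : V) (p : Sym2 V → Prop) [DecidablePred p]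
    (hp : ∀ g ∈ S, p g → ∃ v, v ∈ g ∧ v ∈ s(a, b)) :
    (S.filter p).card ≤ 2 := by
  classical
  have h := Finset.card_le_card_of_injOn
    (f := fun g => if h : ∃ v, v ∈ g ∧ v ∈ s(a, b) then h.choose else a)
    (s := S.filter p) (t := ({a, b} : Finset V)) ?_ ?_
  · exact h.trans ((Finset.card_insert_le _ _).trans (by simp))
  · intro g hg
    obtain ⟨hgS, hpg⟩ := Finset.mem_filter.mp hg
    have hx : ∃ v, v ∈ g ∧ v ∈ s(a, b) := hp g hgS hpg
    simp only [dif_pos hx]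
    have := hx.choose_spec.2
    rw [Sym2.mem_iff] at this
    simp only [Finset.coe_insert, Finset.coe_singleton, Set.mem_insert_iff, Set.mem_singleton_iff]
    exact this
  · intro g1 hg1 g2 hg2 heq
    obtain ⟨h1S, h1p⟩ := Finset.mem_filter.mp hg1
    obtain ⟨h2S, h2p⟩ := Finset.mem_filter.mp hg2
    have hx1 : ∃ v, v ∈ g1 ∧ v ∈ s(a, b) := hp g1 h1S h1p
    have hx2 : ∃ v, v ∈ g2 ∧ v ∈ s(a, b) := hp g2 h2S h2p
    simp only [dif_pos hx1, dif_pos hx2] at heq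
    by_contra hne
    exact hdisj g1 h1S g2 h2S hne hx1.choose hx1.choose_spec.1
      (heq ▸ hx2.choose_spec.1)

lemma key_aux {G : SimpleGraph V} {M M' : Finset (Sym2 V)}
    (hM : IsMaximalMatching G M) (hno : ¬ HasAugmentingPath3 G M)
    (hM' : IsMatching G M') {e1 e2 : Sym2 V} {u v : V}
    (he1 : e1 ∈ M') (he2 : e2 ∈ M') (hne : e1 ≠ e2)
    (hgM : s(u, v) ∈ M)
    (hu : u ∈ e1) (hv : v ∈ e2)
    (h1 : ∀ f ∈ M, (∃ w, w ∈ e1 ∧ w ∈ f) → f = s(u, v))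
    (h2 : ∀ f ∈ M, (∃ w, w ∈ e2 ∧ w ∈ f) → f = s(u, v)) : False := by
  obtain ⟨⟨hMe, hMd⟩, hmax⟩ := hM
  obtain ⟨hM'e, hM'd⟩ := hM'
  -- names for the other endpoints
  set x := Sym2.Mem.other hu with hxdef
  set y := Sym2.Mem.other hv with hydef
  have hxe1 : x ∈ e1 := Sym2.other_mem hu
  have hye2 : y ∈ e2 := Sym2.other_mem hv
  have he1eq : s(u, x) = e1 := Sym2.other_spec hu
  have he2eq : s(v, y) = e2 := Sym2.other_spec hv
  have hAdjuv : G.Adj u v := (SimpleGraph.mem_edgeSet G).mp (hMe _ hgM)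
  have hAdjux : G.Adj u x := by
    rw [← SimpleGraph.mem_edgeSet, he1eq]; exact hM'e e1 he1
  have hAdjvy : G.Adj v y := by
    rw [← SimpleGraph.mem_edgeSet, he2eq]; exact hM'e e2 he2
  -- disjointness facts
  have hv_not_e1 : v ∉ e1 := hM'd e2 he2 e1 he1 hne.symm v hv
  have hu_not_e2 : u ∉ e2 := hM'd e1 he1 e2 he2 hne u hu
  have hxu : x ≠ u := hAdjux.ne'
  have hxv : x ≠ v := fun h => hv_not_e1 (h ▸ hxe1)
  have hxy : x ≠ y := fun h => hM'd e1 he1 e2 he2 hne x hxe1 (h ▸ hye2)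
  have huy : u ≠ y := fun h => hu_not_e2 (h ▸ hye2)
  have hvy : v ≠ y := hAdjvy.ne
  have huv : u ≠ v := hAdjuv.ne
  -- x and y are not covered by M
  have hxfree : ∀ f ∈ M, x ∉ f := by
    intro f hf hxf
    have := h1 f hf ⟨x, hxe1, hxf⟩
    rw [this, Sym2.mem_iff] at hxf
    rcases hxf with h | h
    · exact hxu h
    · exact hxv h
  have hyfree : ∀ f ∈ M, y ∉ f := by
    intro f hf hyf
    have := h2 f hf ⟨y, hye2, hyf⟩
    rw [this, Sym2.mem_iff] at hyf
    rcases hyf with h | h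
    · exact huy h.symm
    · exact hvy h.symm
  -- outer edges are not in M
  have hxuM : s(x, u) ∉ M := fun h => hxfree _ h (Sym2.mem_mk_left x u)
  have hvyM : s(v, y) ∉ M := fun h => hyfree _ h (Sym2.mem_mk_right v y)
  exact hno ⟨x, u, v, y, by
    simp [List.nodup_cons, hxu, hxv, hxy, huv, huy, hvy],
    hAdjux.symm, hAdjuv, hAdjvy, hgM, hxuM, hvyM, hxfree, hyfree⟩
end AuxLemmas

/-- If `M` is a maximal matching of a finite simple graph `G` admitting no
augmenting path of length 3, then every matching `M'` of `G` satisfies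
`2 |M'| ≤ 3 |M|`. -/
theorem two_mul_card_matching_le_three_mul
    {V : Type*} [Fintype V] [DecidableEq V] (G : SimpleGraph V)
    (M : Finset (Sym2 V)) (hM : IsMaximalMatching G M)
    (hno : ¬ HasAugmentingPath3 G M)
    (M' : Finset (Sym2 V)) (hM' : IsMatching G M') :
    2 * M'.card ≤ 3 * M.card := by
  classical
  obtain ⟨⟨hMe, hMd⟩, hmax⟩ := hM
  obtain ⟨hM'e, hM'd⟩ := hM'
  set N : Sym2 V → Finset (Sym2 V) :=
    fun e => M.filter (fun f => ∃ w, w ∈ e ∧ w ∈ f) with hN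
  -- every edge of M' touches at least one edge of M
  have hone : ∀ e' ∈ M', 1 ≤ (N e').card := by
    intro e' he'
    obtain ⟨f, hf, w, hw1, hw2⟩ := hmax e' (hM'e e' he')
    exact Finset.card_pos.mpr ⟨f, Finset.mem_filter.mpr ⟨hf, w, hw1, hw2⟩⟩
  -- double counting: total touching pairs ≤ 2|M|
  have hsum : ∑ e' ∈ M', (N e').card ≤ 2 * M.card := by
    have hswap : ∑ e' ∈ M', (N e').card
        = ∑ f ∈ M, (M'.filter (fun e' => ∃ w, w ∈ e' ∧ w ∈ f)).card := by
      simp only [hN, Finset.card_filter]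
      rw [Finset.sum_comm]
    rw [hswap]
    calc ∑ f ∈ M, (M'.filter (fun e' => ∃ w, w ∈ e' ∧ w ∈ f)).card
        ≤ ∑ _f ∈ M, 2 := by
          apply Finset.sum_le_sum
          intro f hf
          induction f using Sym2.ind with
          | _ a b =>
            exact card_filter_touch_le_two M' hM'd a b _ (fun g _ hg => hg)
      _ = 2 * M.card := by rw [Finset.sum_const, smul_eq_mul, mul_comm]
  -- edges of M' touching exactly one M-edge inject into M
  set A : Finset (Sym2 V) := M'.filter (fun e' => (N e').card ≤ 1) with hA
  have hAcard : A.card ≤ M.card := by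
    apply Finset.card_le_card_of_injOn
      (f := fun e' => if h : (N e').Nonempty then h.choose else e')
    · intro e' he'
      obtain ⟨he'M', hle⟩ := Finset.mem_filter.mp he'
      have hne : (N e').Nonempty := Finset.card_pos.mp (hone e' he'M')
      dsimp only
      rw [dif_pos hne]
      exact (Finset.mem_filter.mp hne.choose_spec).1
    · intro e1 hA1 e2 hA2 heq
      obtain ⟨he1, hle1⟩ := Finset.mem_filter.mp hA1
      obtain ⟨he2, hle2⟩ := Finset.mem_filter.mp hA2
      have hne1 : (N e1).Nonempty := Finset.card_pos.mp (hone e1 he1)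
      have hne2 : (N e2).Nonempty := Finset.card_pos.mp (hone e2 he2)
      simp only at heq
      rw [dif_pos hne1, dif_pos hne2] at heq
      by_contra hne
      have hgN1 : hne1.choose ∈ N e1 := hne1.choose_spec
      have hgN2 : hne1.choose ∈ N e2 := heq ▸ hne2.choose_spec
      have hgM : hne1.choose ∈ M := (Finset.mem_filter.mp hgN1).1
      have huniq1 : ∀ f ∈ M, (∃ w, w ∈ e1 ∧ w ∈ f) → f = hne1.choose := by
        intro f hf htouch
        exact Finset.card_le_one.mp hle1 f
          (Finset.mem_filter.mpr ⟨hf, htouch⟩) hne1.choose hgN1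
      have huniq2 : ∀ f ∈ M, (∃ w, w ∈ e2 ∧ w ∈ f) → f = hne1.choose := by
        intro f hf htouch
        exact Finset.card_le_one.mp hle2 f
          (Finset.mem_filter.mpr ⟨hf, htouch⟩) hne1.choose hgN2
      obtain ⟨u, v, huv⟩ : ∃ u v, hne1.choose = s(u, v) :=
        Sym2.ind (f := fun z => ∃ u v, z = s(u, v))
          (fun u v => ⟨u, v, rfl⟩) hne1.choose
      rw [huv] at hgN1 hgN2 hgM huniq1 huniq2
      obtain ⟨w1, hw1e, hw1g⟩ := (Finset.mem_filter.mp hgN1).2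
      obtain ⟨w2, hw2e, hw2g⟩ := (Finset.mem_filter.mp hgN2).2
      rw [Sym2.mem_iff] at hw1g hw2g
      have hdiff : w1 ≠ w2 := by
        rintro rfl
        exact hM'd e1 he1 e2 he2 hne w1 hw1e hw2e
      rcases hw1g with rfl | rfl <;> rcases hw2g with rfl | rfl
      · exact hdiff rfl
      · exact key_aux ⟨⟨hMe, hMd⟩, hmax⟩ hno ⟨hM'e, hM'd⟩ he1 he2 hne hgM
          hw1e hw2e huniq1 huniq2
      · have hswap : s(w1, w2) = s(w2, w1) := Sym2.eq_swap
        exact key_aux ⟨⟨hMe, hMd⟩, hmax⟩ hno ⟨hM'e, hM'd⟩ he2 he1 (fun h => hne h.symm)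
          (hswap ▸ hgM) hw2e hw1e
          (fun f hf ht => hswap ▸ huniq2 f hf ht)
          (fun f hf ht => hswap ▸ huniq1 f hf ht)
      · exact hdiff rfl
  -- final counting
  set B : Finset (Sym2 V) := M'.filter (fun e' => ¬ ((N e').card ≤ 1)) with hB
  have hAB : A.card + B.card = M'.card :=
    Finset.card_filter_add_card_filter_not _
  have hsplit : ∑ e' ∈ A, (N e').card + ∑ e' ∈ B, (N e').card
      = ∑ e' ∈ M', (N e').card :=
    Finset.sum_filter_add_sum_filter_not M' _ _
  have hAlow : A.card ≤ ∑ e' ∈ A, (N e').card := by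
    calc A.card = ∑ _e' ∈ A, 1 := by simp
      _ ≤ ∑ e' ∈ A, (N e').card :=
        Finset.sum_le_sum fun e' he' =>
          hone e' (Finset.mem_filter.mp he').1
  have hBlow : 2 * B.card ≤ ∑ e' ∈ B, (N e').card := by
    calc 2 * B.card = ∑ _e' ∈ B, 2 := by
          rw [Finset.sum_const, smul_eq_mul, mul_comm]
      _ ≤ ∑ e' ∈ B, (N e').card :=
        Finset.sum_le_sum fun e' he' => by
          have := (Finset.mem_filter.mp he').2
          omega
  omega
end

section
/- Let G be a finite simple graph, let M be a matching of G, and let P be an augmenting path with respect to M whose edge set is E(P). Then the symmetric difference M △ E(P) is a matching of G of size |M| + 1. -/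
/-- The path `p` (with edges `e₁, …, e_k`, 1-indexed) is an augmenting path with
respect to the matching `M`: it is a path with at least one edge, it is
alternating (`eᵢ ∈ M` iff `i` is even, i.e. the edge with 0-based index `j`
belongs to `M` iff `j` is odd), and neither endpoint is incident to an edge
of `M`. -/
def IsAugmentingPath {V : Type*} (G : SimpleGraph V) (M : Finset (Sym2 V))
    {a b : V} (p : G.Walk a b) : Prop :=
  p.IsPath ∧ 0 < p.length ∧
  (∀ i : Fin p.edges.length, p.edges.get i ∈ M ↔ Odd i.val) ∧
  (∀ f ∈ M, a ∉ f) ∧ (∀ f ∈ M, b ∉ f)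

lemma walk_edges_getElem {V : Type*} {G : SimpleGraph V} :
    ∀ {u v : V} (p : G.Walk u v) (i : ℕ) (hi : i < p.length),
      p.edges[i]'(by simpa using hi) = s(p.getVert i, p.getVert (i+1))
  | u, v, .cons h q, 0, hi => by
      simp [SimpleGraph.Walk.edges_cons, SimpleGraph.Walk.getVert_cons_succ]
  | u, v, .cons h q, (i+1), hi => by
      simp only [SimpleGraph.Walk.edges_cons, SimpleGraph.Walk.getVert_cons_succ,
        List.getElem_cons_succ]
      exact walk_edges_getElem q i (by simpa using hi)

lemma walk_support_getElem {V : Type*} {G : SimpleGraph V} :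
    ∀ {u v : V} (p : G.Walk u v) (i : ℕ) (hi : i < p.length + 1),
      p.support[i]'(by simpa using hi) = p.getVert i
  | _, _, .nil, 0, hi => by simp
  | u, v, .cons h q, 0, hi => by simp
  | u, v, .cons h q, (i+1), hi => by
      simp only [SimpleGraph.Walk.support_cons, SimpleGraph.Walk.getVert_cons_succ,
        List.getElem_cons_succ]
      exact walk_support_getElem q i (by simpa using hi)

lemma path_getVert_inj {V : Type*} {G : SimpleGraph V} {u v : V} {p : G.Walk u v}
    (hp : p.IsPath) {i j : ℕ} (hi : i ≤ p.length) (hj : j ≤ p.length)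
    (h : p.getVert i = p.getVert j) : i = j := by
  have hs := hp.support_nodup
  have hl : p.support.length = p.length + 1 := by simp
  have hi' : i < p.support.length := by omega
  have hj' : j < p.support.length := by omega
  have hinj := List.nodup_iff_injective_getElem.mp hs
  have h2 : (⟨i, hi'⟩ : Fin p.support.length) = ⟨j, hj'⟩ := by
    apply hinj
    show p.support[i] = p.support[j]
    rw [walk_support_getElem p i (by omega), walk_support_getElem p j (by omega)]
    exact h
  exact congrArg Fin.val h2

lemma card_odd_range (k : ℕ) :
    ((Finset.range (2*k+1)).filter (fun i => Odd i)).card = k := by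
  induction k with
  | zero => decide
  | succ k ih =>
      have : 2 * (k+1) + 1 = (2*k+1) + 1 + 1 := by ring
      rw [this, Finset.range_add_one, Finset.range_add_one, Finset.filter_insert,
        Finset.filter_insert]
      have h1 : ¬ Odd (2*k+1+1) := by simp [Nat.odd_iff, Nat.add_mod, Nat.mul_mod]
      have h2 : Odd (2*k+1) := ⟨k, by ring⟩
      rw [if_neg h1, if_pos h2, Finset.card_insert_of_notMem (by simp), ih]

/-- Augmenting along an augmenting path `P` for a matching `M` (i.e. taking the
symmetric difference `M △ E(P)`) yields a matching of size `|M| + 1`. -/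
theorem symmDiff_augmentingPath_isMatching
    {V : Type*} [Fintype V] [DecidableEq V] (G : SimpleGraph V)
    (M : Finset (Sym2 V)) (hM : IsMatching G M)
    {a b : V} (p : G.Walk a b) (hp : IsAugmentingPath G M p) :
    IsMatching G (symmDiff M p.edges.toFinset) ∧
    (symmDiff M p.edges.toFinset).card = M.card + 1 := by
  obtain ⟨hpath, hlen, halt, ha, hb⟩ := hp
  have hel : p.edges.length = p.length := p.length_edges
  -- restate alternation with getElem
  have halt' : ∀ (i : ℕ) (hi : i < p.length),
      (p.edges[i]'(by omega) ∈ M ↔ Odd i) := by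
    intro i hi
    simpa using halt ⟨i, by omega⟩
  have hnodup : p.edges.Nodup := hpath.isTrail.edges_nodup
  -- the last index is even, so the length is odd
  have hlast : ¬ Odd (p.length - 1) := by
    intro hodd
    have h1 : p.length - 1 < p.length := by omega
    have := (halt' (p.length - 1) h1).mpr hodd
    refine hb _ this ?_
    rw [walk_edges_getElem p (p.length - 1) h1]
    have : p.length - 1 + 1 = p.length := by omega
    rw [this, p.getVert_length]
    simp
  have hodd_len : Odd p.length := by
    rcases Nat.even_or_odd p.length with he | ho
    · exact absurd (by obtain ⟨m, hm⟩ := he; exact ⟨m - 1, by omega⟩ : Odd (p.length - 1)) hlast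
    · exact ho
  -- membership in an edge of the path forces being a getVert
  have hmem_edge : ∀ (i : ℕ) (hi : i < p.length) (v : V),
      v ∈ (p.edges[i]'(by omega)) → v = p.getVert i ∨ v = p.getVert (i+1) := by
    intro i hi v hv
    rw [walk_edges_getElem p i hi] at hv
    simpa using hv
  -- key disjointness fact: an M-edge not on the path shares no vertex with a path edge not in M
  have key : ∀ e ∈ M, e ∉ p.edges → ∀ (j : ℕ) (hj : j < p.length),
      (p.edges[j]'(by omega)) ∉ M → ∀ v ∈ e, v ∉ (p.edges[j]'(by omega)) := by
    intro e heM heP j hj hjM v hve hvj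
    have hjeven : ¬ Odd j := fun h => hjM ((halt' j hj).mpr h)
    rcases hmem_edge j hj v hvj with hv | hv
    · -- v = getVert j
      rcases Nat.eq_zero_or_pos j with rfl | hj0
      · rw [p.getVert_zero] at hv
        rw [hv] at hve
        exact ha e heM hve
      · -- edge j-1 is in M and contains v
        have hj1 : j - 1 < p.length := by omega
        have hoddj1 : Odd (j - 1) := by
          rcases Nat.even_or_odd j with he | ho
          · obtain ⟨m, hm⟩ := he; exact ⟨m - 1, by omega⟩
          · exact absurd ho hjeven
        have hgM : (p.edges[j-1]'(by omega)) ∈ M := (halt' (j-1) hj1).mpr hoddj1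
        have hvg : v ∈ (p.edges[j-1]'(by omega)) := by
          rw [walk_edges_getElem p (j-1) hj1]
          have : j - 1 + 1 = j := by omega
          rw [this, hv]; simp
        by_cases hef : e = p.edges[j-1]'(by omega)
        · exact heP (hef ▸ List.getElem_mem _)
        · exact hM.2 e heM _ hgM hef v hve hvg
    · -- v = getVert (j+1)
      rcases eq_or_lt_of_le (Nat.succ_le_of_lt hj) with hjn | hjn
      · have hvb : v = b := by
          rw [hv, show j + 1 = p.length from hjn, p.getVert_length]
        rw [hvb] at hve
        exact hb e heM hve
      · have hoddj1 : Odd (j + 1) := by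
          rcases Nat.even_or_odd j with he | ho
          · obtain ⟨m, hm⟩ := he; exact ⟨m, by omega⟩
          · exact absurd ho hjeven
        have hgM : (p.edges[j+1]'(by omega)) ∈ M := (halt' (j+1) hjn).mpr hoddj1
        have hvg : v ∈ (p.edges[j+1]'(by omega)) := by
          rw [walk_edges_getElem p (j+1) hjn, hv]; simp
        by_cases hef : e = p.edges[j+1]'(by omega)
        · exact heP (hef ▸ List.getElem_mem _)
        · exact hM.2 e heM _ hgM hef v hve hvg
  -- edges of the path indexed
  have hmemP : ∀ e ∈ p.edges, ∃ (i : ℕ) (hi : i < p.length), e = p.edges[i]'(by omega) := by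
    intro e he
    obtain ⟨i, hi, hie⟩ := List.getElem_of_mem he
    exact ⟨i, by omega, hie.symm⟩
  constructor
  · constructor
    · intro e he
      rw [Finset.mem_symmDiff] at he
      rcases he with ⟨heM, _⟩ | ⟨heP, _⟩
      · exact hM.1 e heM
      · exact p.edges_subset_edgeSet (List.mem_toFinset.mp heP)
    · intro e he f hf hef v hve hvf
      rw [Finset.mem_symmDiff] at he hf
      rcases he with ⟨heM, heP⟩ | ⟨heP, heM⟩ <;> rcases hf with ⟨hfM, hfP⟩ | ⟨hfP, hfM⟩
      · exact hM.2 e heM f hfM hef v hve hvf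
      · obtain ⟨j, hj, rfl⟩ := hmemP f (List.mem_toFinset.mp hfP)
        exact key e heM (fun h => heP (List.mem_toFinset.mpr h)) j hj hfM v hve hvf
      · obtain ⟨j, hj, rfl⟩ := hmemP e (List.mem_toFinset.mp heP)
        exact key f hfM (fun h => hfP (List.mem_toFinset.mpr h)) j hj heM v hvf hve
      · -- both path edges, not in M, so both even indices; can't share a vertex
        obtain ⟨i, hi, rfl⟩ := hmemP e (List.mem_toFinset.mp heP)
        obtain ⟨j, hj, rfl⟩ := hmemP f (List.mem_toFinset.mp hfP)
        have hieven : ¬ Odd i := fun h => heM ((halt' i hi).mpr h)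
        have hjeven : ¬ Odd j := fun h => hfM ((halt' j hj).mpr h)
        have hij : i ≠ j := fun h => hef (by subst h; rfl)
        rcases hmem_edge i hi v hve with hv1 | hv1 <;>
          rcases hmem_edge j hj v hvf with hv2 | hv2
        · exact hij (path_getVert_inj hpath (by omega) (by omega) (hv1 ▸ hv2 ▸ rfl))
        · have : i = j + 1 := path_getVert_inj hpath (by omega) (by omega) (hv1 ▸ hv2 ▸ rfl)
          rw [Nat.odd_iff] at hieven hjeven; omega
        · have : i + 1 = j := path_getVert_inj hpath (by omega) (by omega) (hv1 ▸ hv2 ▸ rfl)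
          rw [Nat.odd_iff] at hieven hjeven; omega
        · have : i + 1 = j + 1 := path_getVert_inj hpath (by omega) (by omega) (hv1 ▸ hv2 ▸ rfl)
          omega
  · -- cardinality
    obtain ⟨k, hk⟩ := hodd_len
    have hE : p.edges.toFinset.card = p.length := by
      rw [List.toFinset_card_of_nodup hnodup, hel]
    -- M ∩ E(P) = image of odd indices
    have hinter : M ∩ p.edges.toFinset =
        ((Finset.range p.length).filter (fun i => Odd i)).image
          (fun i => if h : i < p.length then p.edges[i]'(by omega) else s(a, a)) := by
      ext e
      simp only [Finset.mem_inter, Finset.mem_image, Finset.mem_filter, Finset.mem_range,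
        List.mem_toFinset]
      constructor
      · rintro ⟨heM, heP⟩
        obtain ⟨i, hi, rfl⟩ := hmemP e heP
        exact ⟨i, ⟨hi, (halt' i hi).mp heM⟩, by rw [dif_pos hi]⟩
      · rintro ⟨i, ⟨hi, hodd⟩, rfl⟩
        rw [dif_pos hi]
        exact ⟨(halt' i hi).mpr hodd, List.getElem_mem _⟩
    have hinj : Set.InjOn
        (fun i => if h : i < p.length then p.edges[i]'(by omega) else s(a, a))
        ((Finset.range p.length).filter (fun i => Odd i)) := by
      intro i hi j hj hij
      simp only [Finset.coe_filter, Finset.mem_range, Set.mem_setOf_eq] at hi hj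
      dsimp only at hij
      rw [dif_pos hi.1, dif_pos hj.1] at hij
      rw [walk_edges_getElem p i hi.1, walk_edges_getElem p j hj.1] at hij
      rw [Sym2.eq_iff] at hij
      rcases hij with ⟨h1, _⟩ | ⟨h1, h2⟩
      · exact path_getVert_inj hpath (by omega) (by omega) h1
      · have e1 := path_getVert_inj hpath (by omega) (by omega) h1
        have e2 := path_getVert_inj hpath (by omega) (by omega) h2
        omega
    have hcard_inter : (M ∩ p.edges.toFinset).card = k := by
      rw [hinter, Finset.card_image_of_injOn hinj, hk]
      exact card_odd_range k
    have hsub : (M ∩ p.edges.toFinset).card ≤ M.card :=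
      Finset.card_le_card (Finset.inter_subset_left)
    rw [symmDiff_def]
    rw [Finset.sup_eq_union,
      Finset.card_union_of_disjoint (disjoint_sdiff_sdiff)]
    have h1 : (M \ p.edges.toFinset).card + (M ∩ p.edges.toFinset).card = M.card :=
      Finset.card_sdiff_add_card_inter M _
    have h2 : (p.edges.toFinset \ M).card + (p.edges.toFinset ∩ M).card =
        p.edges.toFinset.card := Finset.card_sdiff_add_card_inter _ M
    rw [Finset.inter_comm] at h2
    omega
end

section
/- For every real number d with 1 ≤ d < 3√3/2, the polynomial r³ − d·r² + d has exactly one real root, and this root is negative. -/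
/-- For every real `d` with `1 ≤ d < 3√3/2`, the polynomial `r³ − d·r² + d`
has exactly one real root, and this root is negative. -/
theorem cubic_unique_real_root (d : ℝ) (hd1 : 1 ≤ d) (hd : d < 3 * Real.sqrt 3 / 2) :
    ∃ r : ℝ, r < 0 ∧ r ^ 3 - d * r ^ 2 + d = 0 ∧
      ∀ s : ℝ, s ^ 3 - d * s ^ 2 + d = 0 → s = r := by
  have hd0 : (0:ℝ) < d := lt_of_lt_of_le one_pos hd1
  have h3 : Real.sqrt 3 ^ 2 = 3 := Real.sq_sqrt (by norm_num)
  have hdsq : 4 * d ^ 2 < 27 := by nlinarith [Real.sqrt_nonneg 3]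
  -- any root is negative
  have hneg : ∀ s : ℝ, s ^ 3 - d * s ^ 2 + d = 0 → s < 0 := by
    intro s hs
    by_contra h
    push_neg at h
    nlinarith [mul_nonneg (sq_nonneg (3 * s - 2 * d)) (show (0:ℝ) ≤ 3 * s + d by linarith)]
  -- existence via IVT
  have hcont : ContinuousOn (fun r : ℝ => r ^ 3 - d * r ^ 2 + d) (Set.Icc (-d) 0) := by
    fun_prop
  have hsub := intermediate_value_Icc (show (-d) ≤ 0 by linarith) hcont
  have h0mem : (0:ℝ) ∈ Set.Icc ((-d) ^ 3 - d * (-d) ^ 2 + d) ((0:ℝ) ^ 3 - d * 0 ^ 2 + d) := by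
    constructor <;> nlinarith
  obtain ⟨r, hrmem, hr⟩ := hsub h0mem
  have hr' : r ^ 3 - d * r ^ 2 + d = 0 := hr
  refine ⟨r, hneg r hr', hr', ?_⟩
  intro s hs
  have hsneg := hneg s hs
  have hrn := hneg r hr'
  have key : (s - r) * (s ^ 2 + s * r + r ^ 2 - d * (s + r)) = 0 := by
    linear_combination hs - hr'
  have hpos : 0 < s ^ 2 + s * r + r ^ 2 - d * (s + r) := by
    nlinarith [sq_nonneg (s + r), sq_nonneg s, sq_nonneg r]
  have := mul_eq_zero.mp key
  rcases this with h | h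
  · linarith
  · linarith
end

section
/- Let d be a real number with 1 ≤ d < 3√3/2 and let (g_n)_{n≥0} be a sequence of real numbers satisfying g_{n+3} = d·(g_{n+2} − g_n) for all n ≥ 0, with (g_0, g_1, g_2) ≠ (0, 0, 0). Then g_n < 0 for infinitely many n, i.e., for every N there exists n ≥ N with g_n < 0. -/
/-- Oscillation for a second-order recurrence with complex (non-real) roots:
if `h (n+2) = a * h (n+1) - b * h n` with `0 < b`, `a^2 < 4*b`, then `h`
cannot be nonnegative on a tail once it is positive somewhere on it. -/
lemma osc_aux (a b : ℝ) (hb : 0 < b) (hdisc : a ^ 2 < 4 * b)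
    (h : ℕ → ℝ) (hrec : ∀ n, h (n + 2) = a * h (n + 1) - b * h n)
    (M : ℕ) (h0 : 0 < h M) (hnn : ∀ n, M ≤ n → 0 ≤ h n) : False := by
  have hδ : 0 < b - a ^ 2 / 4 := by nlinarith
  have hpos : ∀ n, M ≤ n → 0 < h n := by
    intro n hn
    induction n, hn using Nat.le_induction with
    | base => exact h0
    | succ n hn ih =>
      rcases (hnn (n + 1) (by omega)).eq_or_lt with he | hl
      · exfalso
        have h2 := hnn (n + 2) (by omega)
        rw [hrec n, ← he] at h2
        nlinarith
      · exact hl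
  set t : ℕ → ℝ := fun n => h (n + 1) / h n with ht
  have htpos : ∀ n, M ≤ n → 0 < t n := fun n hn =>
    div_pos (hpos (n + 1) (by omega)) (hpos n hn)
  have hstep : ∀ n, M ≤ n → t (n + 1) ≤ t n - (b - a ^ 2 / 4) / t n := by
    intro n hn
    have h1 := hpos n hn
    have h2 := hpos (n + 1) (by omega)
    have hu := htpos n hn
    have e : t (n + 1) = a - b / t n := by
      simp only [ht]
      rw [hrec n]
      field_simp
    rw [e, ← sub_nonneg]
    have expand : t n - (b - a ^ 2 / 4) / t n - (a - b / t n) = (t n - a / 2) ^ 2 / t n := by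
      field_simp
      ring
    rw [expand]
    positivity
  have hTpos : 0 < t M := htpos M le_rfl
  have hcpos : 0 < (b - a ^ 2 / 4) / t M := div_pos hδ hTpos
  have hdec : ∀ k : ℕ, t (M + k) ≤ t M - k * ((b - a ^ 2 / 4) / t M) := by
    intro k
    induction k with
    | zero => simp
    | succ k ih =>
      have hk : 0 ≤ (k : ℝ) * ((b - a ^ 2 / 4) / t M) := by positivity
      have hTle : t (M + k) ≤ t M := le_trans ih (by linarith)
      have hs := hstep (M + k) (by omega)
      have hq : (b - a ^ 2 / 4) / t M ≤ (b - a ^ 2 / 4) / t (M + k) := by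
        gcongr
        exact htpos _ (by omega)
      have he : M + (k + 1) = (M + k) + 1 := by omega
      rw [he]
      push_cast
      linarith
  obtain ⟨k, hk⟩ := exists_nat_gt (t M / ((b - a ^ 2 / 4) / t M))
  have h1 := hdec k
  have h2 := htpos (M + k) (by omega)
  rw [div_lt_iff₀ hcpos] at hk
  linarith

/-- Oscillation of the recurrence `g_{n+3} = d (g_{n+2} − g_n)` for
`1 ≤ d < 3√3/2`: for every not-identically-zero initial condition, the
solution is negative infinitely often. -/
theorem recurrence_oscillates (d : ℝ) (hd1 : 1 ≤ d) (hd : d < 3 * Real.sqrt 3 / 2)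
    (g : ℕ → ℝ) (hrec : ∀ n : ℕ, g (n + 3) = d * (g (n + 2) - g n))
    (hne : ¬ (g 0 = 0 ∧ g 1 = 0 ∧ g 2 = 0)) :
    ∀ N : ℕ, ∃ n : ℕ, N ≤ n ∧ g n < 0 := by
  by_contra hcon
  push_neg at hcon
  obtain ⟨N, hN⟩ := hcon
  -- hN : ∀ n, N ≤ n → 0 ≤ g n
  have hd0 : (0:ℝ) < d := by linarith
  have hsq : d ^ 2 < 27 / 4 := by
    have h3 : Real.sqrt 3 ^ 2 = 3 := Real.sq_sqrt (by norm_num)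
    have h3n : 0 ≤ Real.sqrt 3 := Real.sqrt_nonneg 3
    nlinarith
  -- find the negative root r0 ∈ (-d, -d/3) of x^3 - d x^2 + d
  have hcont : ContinuousOn (fun x : ℝ => x ^ 3 - d * x ^ 2 + d) (Set.Icc (-d) (-d/3)) := by
    fun_prop
  have hle : (-d : ℝ) ≤ -d / 3 := by linarith
  have hPa : (fun x : ℝ => x ^ 3 - d * x ^ 2 + d) (-d) ≤ 0 := by
    simp only
    nlinarith
  have hPb : 0 < (fun x : ℝ => x ^ 3 - d * x ^ 2 + d) (-d/3) := by
    simp only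
    nlinarith
  have hmem : (0:ℝ) ∈ Set.Icc ((fun x : ℝ => x ^ 3 - d * x ^ 2 + d) (-d))
      ((fun x : ℝ => x ^ 3 - d * x ^ 2 + d) (-d/3)) := ⟨hPa, hPb.le⟩
  obtain ⟨r0, hr0mem, hr0⟩ := intermediate_value_Icc hle hcont hmem
  -- hr0 : r0^3 - d*r0^2 + d = 0
  have hroot : r0 ^ 3 - d * r0 ^ 2 + d = 0 := hr0
  have hr0lt : r0 < -d / 3 := by
    rcases hr0mem.2.eq_or_lt with he | hl
    · exfalso; rw [he] at hroot; simp only at hPb; nlinarith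
    · exact hl
  have hr0neg : r0 < 0 := by linarith
  set a : ℝ := d - r0 with ha
  set b : ℝ := r0 ^ 2 - d * r0 with hbdef
  have hb : 0 < b := by nlinarith
  have hdisc : a ^ 2 < 4 * b := by nlinarith [mul_pos (by linarith : (0:ℝ) < -(3 * r0 + d)) (by linarith : (0:ℝ) < d - r0)]
  set h : ℕ → ℝ := fun n => g (n + 1) - r0 * g n with hh
  have hrec2 : ∀ n, h (n + 2) = a * h (n + 1) - b * h n := by
    intro n
    simp only [hh, ha, hbdef]
    have e := hrec n
    have e3 : g (n + 2 + 1) = g (n + 3) := by norm_num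
    linear_combination e + (- g n) * hroot
  have hnn : ∀ n, N ≤ n → 0 ≤ h n := by
    intro n hn
    have h1 := hN n hn
    have h2 := hN (n + 1) (by omega)
    simp only [hh]
    nlinarith
  by_cases hall : ∀ n, N ≤ n → h n = 0
  · -- then g vanishes on the tail, hence everywhere, contradiction
    have hzero : ∀ n, N ≤ n → g n = 0 := by
      intro n hn
      have h1 := hall n hn
      have h2 := hN n hn
      have h3 := hN (n + 1) (by omega)
      simp only [hh] at h1
      rcases h2.eq_or_lt with he | hl
      · exact he.symm
      · exfalso; nlinarith [mul_neg_of_neg_of_pos hr0neg hl]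
    have hback : ∀ j n, N ≤ n + j → g n = 0 := by
      intro j
      induction j with
      | zero => intro n hn; exact hzero n (by omega)
      | succ j ih =>
        intro n hn
        rcases le_or_gt N (n + j) with h' | h'
        · exact ih n h'
        · have e3 := hrec n
          have z2 := ih (n + 2) (by omega)
          have z3 := ih (n + 3) (by omega)
          rw [z2, z3] at e3
          nlinarith [e3]
    exact hne ⟨hback N 0 (by omega), hback N 1 (by omega), hback N 2 (by omega)⟩
  · push_neg at hall
    obtain ⟨M, hM, hMne⟩ := hall
    have hMpos : 0 < h M := (hnn M hM).lt_of_ne (Ne.symm hMne)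
    exact osc_aux a b hb hdisc h hrec2 M hMpos (fun n hn => hnn n (le_trans hM hn))
end

section
/- Let d = 3√3/2 and define the sequence (g_n)_{n≥0} by g_0 = d, g_1 = (d−1)·d, g_2 = (d−1)·d², and g_{n+3} = d·(g_{n+2} − g_n) for all n ≥ 0. Then g_n ≥ 0 for all n. -/
/-- At the threshold `d = 3√3/2`, the solution of the recurrence
`g_{n+3} = d (g_{n+2} − g_n)` with initial values `g₀ = d`, `g₁ = (d−1)d`,
`g₂ = (d−1)d²` never becomes negative. -/
theorem recurrence_nonneg_at_threshold (d : ℝ) (hd : d = 3 * Real.sqrt 3 / 2)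
    (g : ℕ → ℝ) (h0 : g 0 = d) (h1 : g 1 = (d - 1) * d) (h2 : g 2 = (d - 1) * d ^ 2)
    (hrec : ∀ n : ℕ, g (n + 3) = d * (g (n + 2) - g n)) :
    ∀ n : ℕ, 0 ≤ g n := by
  have hs : Real.sqrt 3 ^ 2 = 3 := Real.sq_sqrt (by norm_num)
  have hs1 : (1 : ℝ) ≤ Real.sqrt 3 := by nlinarith [Real.sqrt_nonneg 3]
  set s := Real.sqrt 3 with hsdef
  have key : ∀ n, 0 ≤ g n ∧ 0 ≤ g (n + 1) ∧ s * g (n + 1) ≤ g (n + 2) ∧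
      3 * g n ≤ g (n + 2) := by
    intro n
    induction n with
    | zero =>
      refine ⟨?_, ?_, ?_, ?_⟩ <;> norm_num [h0, h1, h2, hd] <;> nlinarith
    | succ n ih =>
      obtain ⟨hg0, hg1, hr, h3⟩ := ih
      have hg2 : 0 ≤ g (n + 2) := le_trans (by nlinarith) h3
      have hrec' := hrec n
      have hstep : s * g (n + 2) ≤ g (n + 3) := by
        rw [hrec', hd]; nlinarith
      refine ⟨hg1, hg2, ?_, ?_⟩
      · show s * g (n + 2) ≤ g (n + 3)
        exact hstep
      · show 3 * g (n + 1) ≤ g (n + 3)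
        nlinarith
  intro n
  exact (key n).1
end

section
/- For every vertex-arrival online algorithm A and every integer n ≥ 2, there exists an input sequence σ of length n such that the graph G(σ) has an independent set of size at least n−1, and if the output set S(A,σ) is an independent set of G(σ) then |S(A,σ)| ≤ 1. -/
/-- `S` is an independent set in `G`: no two of its vertices are adjacent. -/
def IsIndependentSet {V : Type*} (G : SimpleGraph V) (S : Finset V) : Prop :=
  ∀ u ∈ S, ∀ v ∈ S, ¬ G.Adj u v

/-- The graph determined by a vertex-arrival input sequence `σ = (N₁, …, Nₙ)`
(here 0-indexed: `σ i ⊆ {0, …, i−1}`): vertices `i` and `j` are adjacent iff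
one of them is in the neighborhood list of the other. -/
def arrivalGraph {n : ℕ} (σ : Fin n → Finset (Fin n)) : SimpleGraph (Fin n) :=
  SimpleGraph.fromRel (fun i j => i ∈ σ j)

/-- The output of the online algorithm `A` on the input sequence `σ`: the set of
vertices `i` accepted by `A` when shown the prefix `(N₁, …, Nᵢ)`. -/
def outputSet {n : ℕ} (A : ∀ m : ℕ, List (Finset (Fin m)) → Bool)
    (σ : Fin n → Finset (Fin n)) : Finset (Fin n) :=
  Finset.univ.filter fun i => A n ((List.ofFn σ).take (i.val + 1)) = true

lemma take_ofFn_eq_replicate {n : ℕ} (σ : Fin n → Finset (Fin n)) (k : ℕ) (hk : k ≤ n)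
    (h : ∀ j : Fin n, j.val < k → σ j = ∅) :
    (List.ofFn σ).take k = List.replicate k (∅ : Finset (Fin n)) := by
  apply List.ext_getElem
  · simp [hk]
  · intro i h1 h2
    simp only [List.length_take, List.length_ofFn, lt_min_iff] at h1
    simp only [List.getElem_take, List.getElem_ofFn, List.getElem_replicate]
    exact h _ h1.1

/-- Adversary lower bound for Independent Set in the standard vertex-arrival
model: for every online algorithm `A` and every `n ≥ 2` there is an input
sequence `σ` of length `n` such that `G(σ)` has an independent set of size at
least `n − 1`, while if the output of `A` is an independent set of `G(σ)` then
it has at most one vertex. -/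
theorem independentSet_standard_lower_bound
    (A : ∀ m : ℕ, List (Finset (Fin m)) → Bool) (n : ℕ) (hn : 2 ≤ n) :
    ∃ σ : Fin n → Finset (Fin n),
      (∀ i : Fin n, ∀ j ∈ σ i, j < i) ∧
      (∃ I : Finset (Fin n), IsIndependentSet (arrivalGraph σ) I ∧ n - 1 ≤ I.card) ∧
      (IsIndependentSet (arrivalGraph σ) (outputSet A σ) →
        (outputSet A σ).card ≤ 1) := by
  classical
  set P : Fin n → Prop := fun i => A n (List.replicate (i.val + 1) ∅) = true with hP
  by_cases h : (Finset.univ.filter P).Nonempty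
  · -- there is a first accepted vertex t (when fed empty neighborhoods)
    set t := (Finset.univ.filter P).min' h with ht
    have htP : P t := (Finset.mem_filter.mp ((Finset.univ.filter P).min'_mem h)).2
    have htmin : ∀ i : Fin n, P i → t ≤ i := fun i hi =>
      Finset.min'_le _ _ (Finset.mem_filter.mpr ⟨Finset.mem_univ _, hi⟩)
    refine ⟨fun i => if t < i then {t} else ∅, ?_, ?_, ?_⟩
    · intro i j hj
      dsimp only at hj
      split at hj
      · simp only [Finset.mem_singleton] at hj; subst hj; assumption
      · simp at hj
    · refine ⟨Finset.univ.erase t, ?_, ?_⟩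
      · intro u hu v hv hadj
        have hu' := Finset.ne_of_mem_erase hu
        have hv' := Finset.ne_of_mem_erase hv
        rw [arrivalGraph, SimpleGraph.fromRel_adj] at hadj
        rcases hadj.2 with h1 | h1 <;> [skip; skip] <;>
          · split at h1
            · simp only [Finset.mem_singleton] at h1
              first | exact hu' h1 | exact hv' h1
            · simp at h1
      · rw [Finset.card_erase_of_mem (Finset.mem_univ _), Finset.card_univ, Fintype.card_fin]
    · intro hind
      set σ : Fin n → Finset (Fin n) := fun i => if t < i then {t} else ∅ with hσ
      have hpre : ∀ i : Fin n, i ≤ t →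
          (List.ofFn σ).take (i.val + 1) = List.replicate (i.val + 1) ∅ := by
        intro i hi
        apply take_ofFn_eq_replicate _ _ i.2
        intro j hj
        have : ¬ t < j := by
          intro hc
          exact absurd (lt_of_le_of_lt hi hc) (by omega)
        simp [hσ, this]
      have hmem : ∀ i : Fin n, i ∈ outputSet A σ → i = t := by
        intro i hi
        have hi0 := hi
        simp only [outputSet, Finset.mem_filter] at hi
        by_contra hne
        rcases lt_or_gt_of_ne hne with hlt | hgt
        · -- i < t : then i would have been accepted on empty prefix, contradicting minimality
          have : P i := by rw [hP]; rw [hpre i (le_of_lt hlt)] at hi; exact hi.2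
          exact absurd (htmin i this) (not_le.mpr hlt)
        · -- i > t : i is adjacent to t, and t ∈ output, contradicting independence
          have htout : t ∈ outputSet A σ := by
            simp only [outputSet, Finset.mem_filter]
            exact ⟨Finset.mem_univ _, by rw [hpre t le_rfl]; exact htP⟩
          have hadj : (arrivalGraph σ).Adj t i := by
            rw [arrivalGraph, SimpleGraph.fromRel_adj]
            exact ⟨ne_of_lt hgt, Or.inl (by simp [hσ, hgt])⟩
          exact hind t htout i hi0 hadj
      apply Finset.card_le_one.mpr
      intro a ha b hb
      rw [hmem a ha, hmem b hb]
  · -- the algorithm never accepts on all-empty input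
    refine ⟨fun _ => ∅, by simp, ⟨Finset.univ, ?_, by simp⟩, ?_⟩
    · intro u _ v _ hadj
      rw [arrivalGraph, SimpleGraph.fromRel_adj] at hadj
      simp at hadj
    · intro _
      have : outputSet A (fun _ => (∅ : Finset (Fin n))) = ∅ := by
        rw [Finset.eq_empty_iff_forall_notMem]
        intro i hi
        simp only [outputSet, Finset.mem_filter] at hi
        have := take_ofFn_eq_replicate (fun _ => (∅ : Finset (Fin n))) (i.val + 1) i.2
          (fun _ _ => rfl)
        rw [this] at hi
        exact h ⟨i, Finset.mem_filter.mpr ⟨Finset.mem_univ _, hi.2⟩⟩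
      simp [this]
end

section
/- For every edge-arrival online algorithm A and every integer m ≥ 1, there exists a finite sequence σ of pairwise distinct edges such that the graph G(σ) has a matching of size at least m, and if the output set S(A,σ) is a matching of G(σ) then the maximum matching size of G(σ) is at least 2·|S(A,σ)|. -/
/-- The graph determined by an edge-arrival input sequence `σ = (e₁, …, e_k)`:
the simple graph (on the vertex set `ℕ`) whose edges are exactly the edges
occurring in `σ`. -/
def edgeArrivalGraph (σ : List (Sym2 ℕ)) : SimpleGraph ℕ :=
  SimpleGraph.fromEdgeSet (↑σ.toFinset : Set (Sym2 ℕ))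

/-- The output of the edge-arrival online algorithm `A` on the input sequence
`σ`: the set of edges `eᵢ` accepted by `A` when shown the prefix `(e₁, …, eᵢ)`. -/
def outputEdges (A : List (Sym2 ℕ) → Bool) (σ : List (Sym2 ℕ)) : Finset (Sym2 ℕ) :=
  (Finset.univ.filter fun i : Fin σ.length => A (σ.take (i.val + 1)) = true).image σ.get

namespace MatchLB

def ee (i : ℕ) : Sym2 ℕ := s(6*i, 6*i+1)
def ff (i : ℕ) : Sym2 ℕ := s(6*i, 6*i+2)
def gg (i : ℕ) : Sym2 ℕ := s(6*i+1, 6*i+3)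

/-- The adaptive adversary sequence: block `i` is `[ee i]` plus, if the
algorithm accepts `ee i`, the two conflicting edges `ff i, gg i`. -/
def adv (A : List (Sym2 ℕ) → Bool) : ℕ → List (Sym2 ℕ)
  | 0 => []
  | i+1 => adv A i ++ (if A (adv A i ++ [ee i]) = true then [ee i, ff i, gg i] else [ee i])

/-- Whether the algorithm accepts `ee i` when it arrives. -/
def acc (A : List (Sym2 ℕ) → Bool) (i : ℕ) : Bool := A (adv A i ++ [ee i])

lemma adv_succ (A : List (Sym2 ℕ) → Bool) (i : ℕ) :
    adv A (i+1) = adv A i ++ (if acc A i = true then [ee i, ff i, gg i] else [ee i]) := rfl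

lemma mem_adv {A : List (Sym2 ℕ) → Bool} {n : ℕ} {e : Sym2 ℕ} :
    e ∈ adv A n ↔ ∃ i < n, e = ee i ∨ (acc A i = true ∧ (e = ff i ∨ e = gg i)) := by
  induction n with
  | zero => simp [adv]
  | succ n ih =>
    rw [adv_succ, List.mem_append, ih]
    constructor
    · rintro (⟨i, hi, h⟩ | h)
      · exact ⟨i, by omega, h⟩
      · by_cases hc : acc A n = true
        · rw [if_pos hc] at h
          simp only [List.mem_cons, List.mem_singleton, List.not_mem_nil, or_false] at h
          refine ⟨n, by omega, ?_⟩
          rcases h with h | h | h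
          · exact Or.inl h
          · exact Or.inr ⟨hc, Or.inl h⟩
          · exact Or.inr ⟨hc, Or.inr h⟩
        · rw [if_neg hc] at h
          simp only [List.mem_singleton] at h
          exact ⟨n, by omega, Or.inl h⟩
    · rintro ⟨i, hi, h⟩
      rcases Nat.lt_succ_iff_lt_or_eq.mp hi with hi | rfl
      · exact Or.inl ⟨i, hi, h⟩
      · right
        rcases h with rfl | ⟨hc, h⟩
        · by_cases hc : acc A i = true
          · rw [if_pos hc]; simp
          · rw [if_neg hc]; simp
        · rw [if_pos hc]
          rcases h with rfl | rfl <;> simp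

lemma vert_lt {A : List (Sym2 ℕ) → Bool} {n : ℕ} {e : Sym2 ℕ} (he : e ∈ adv A n)
    {v : ℕ} (hv : v ∈ e) : v < 6*n := by
  rcases mem_adv.mp he with ⟨i, hi, h⟩
  rcases h with rfl | ⟨_, rfl | rfl⟩ <;>
    simp only [ee, ff, gg, Sym2.mem_iff] at hv <;> omega

lemma nodup_adv (A : List (Sym2 ℕ) → Bool) (n : ℕ) : (adv A n).Nodup := by
  induction n with
  | zero => simp [adv]
  | succ n ih =>
    rw [adv_succ, List.nodup_append]
    refine ⟨ih, ?_, ?_⟩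
    · split
      · simp only [List.nodup_cons, List.mem_cons, List.mem_singleton, List.not_mem_nil,
          or_false, not_or, List.nodup_nil, and_true, ee, ff, gg, Sym2.eq_iff,
          true_and, not_false_eq_true]
        omega
      · simp
    · intro e he e' he' hee'
      subst hee'
      have : (6*n : ℕ) ∈ e ∨ (6*n+1 : ℕ) ∈ e := by
        split at he'
        · simp only [List.mem_cons, List.mem_singleton, List.not_mem_nil, or_false] at he'
          rcases he' with rfl | rfl | rfl <;> simp [ee, ff, gg, Sym2.mem_iff]
        · simp only [List.mem_singleton] at he'
          subst he'; simp [ee, Sym2.mem_iff]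
      rcases this with h | h <;> have := vert_lt he h <;> omega

lemma prefix_adv (A : List (Sym2 ℕ) → Bool) {n m : ℕ} (h : n ≤ m) :
    adv A n <+: adv A m := by
  induction m with
  | zero => simp_all
  | succ m ih =>
    rcases Nat.lt_succ_iff_lt_or_eq.mp (Nat.lt_succ_of_le h) with h' | rfl
    · exact (ih (by omega)).trans (by rw [adv_succ]; exact List.prefix_append _ _)
    · exact List.prefix_rfl

lemma prefix_ee (A : List (Sym2 ℕ) → Bool) {n m : ℕ} (h : n < m) :
    (adv A n ++ [ee n]) <+: adv A m := by
  refine List.IsPrefix.trans ?_ (prefix_adv A h)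
  rw [adv_succ]
  split
  · exact ⟨[ff n, gg n], by simp⟩
  · exact List.prefix_rfl

lemma length_lt {A : List (Sym2 ℕ) → Bool} {n m : ℕ} (h : n < m) :
    (adv A n).length < (adv A m).length := by
  have := (prefix_ee A h).length_le
  simp only [List.length_append, List.length_singleton] at this
  omega

/-- The index of `ee i` in the sequence. -/
lemma take_get {A : List (Sym2 ℕ) → Bool} {i m : ℕ} (h : i < m) :
    (adv A m).take ((adv A i).length + 1) = adv A i ++ [ee i] ∧
    (adv A m).get ⟨(adv A i).length, length_lt h⟩ = ee i := by
  obtain ⟨t, ht⟩ := prefix_ee A h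
  constructor
  · rw [← ht]
    have : (adv A i).length + 1 = (adv A i ++ [ee i]).length := by simp
    rw [this, List.take_left]
  · rw [List.get_eq_getElem,
      ← (prefix_ee A h).getElem (i := (adv A i).length) (by simp)]
    exact List.getElem_concat_length rfl _

lemma mem_output_iff {A : List (Sym2 ℕ) → Bool} {σ : List (Sym2 ℕ)} {x : Sym2 ℕ} :
    x ∈ outputEdges A σ ↔
      ∃ i : Fin σ.length, A (σ.take (i.val + 1)) = true ∧ σ.get i = x := by
  simp [outputEdges, Finset.mem_image, Finset.mem_filter]

lemma ee_mem_output {A : List (Sym2 ℕ) → Bool} {i m : ℕ} (h : i < m)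
    (hacc : acc A i = true) : ee i ∈ outputEdges A (adv A m) := by
  obtain ⟨htake, hget⟩ := take_get (A := A) h
  exact mem_output_iff.mpr ⟨⟨(adv A i).length, length_lt h⟩, by rw [htake]; exact hacc, hget⟩

end MatchLB

open MatchLB

/-- Adversary lower bound for Matching in the standard edge-arrival model:
for every online algorithm `A` and every `m ≥ 1` there is a sequence `σ` of
pairwise distinct (non-loop) edges such that `G(σ)` has a matching of size at
least `m`, while if the output `S` of `A` is a matching of `G(σ)` then `G(σ)`
has a matching of size at least `2|S|`. -/
theorem matching_standard_lower_bound
    (A : List (Sym2 ℕ) → Bool) (m : ℕ) (hm : 1 ≤ m) :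
    ∃ σ : List (Sym2 ℕ), σ.Nodup ∧ (∀ e ∈ σ, ¬ e.IsDiag) ∧
      (∃ M' : Finset (Sym2 ℕ), IsMatching (edgeArrivalGraph σ) M' ∧ m ≤ M'.card) ∧
      (IsMatching (edgeArrivalGraph σ) (outputEdges A σ) →
        ∃ M'' : Finset (Sym2 ℕ), IsMatching (edgeArrivalGraph σ) M'' ∧
          2 * (outputEdges A σ).card ≤ M''.card) := by
  refine ⟨adv A m, nodup_adv A m, ?_, ?_, ?_⟩
  · -- no loops
    intro e he
    rcases mem_adv.mp he with ⟨i, hi, h⟩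
    rcases h with rfl | ⟨_, rfl | rfl⟩ <;> simp [ee, ff, gg, Sym2.mk_isDiag_iff] <;> omega
  · -- matching of size m : the edges ee i
    refine ⟨(Finset.range m).image ee, ⟨?_, ?_⟩, ?_⟩
    · intro e he
      simp only [Finset.mem_image, Finset.mem_range] at he
      obtain ⟨i, hi, rfl⟩ := he
      rw [edgeArrivalGraph, SimpleGraph.edgeSet_fromEdgeSet]
      refine ⟨by simp [List.mem_toFinset]; exact mem_adv.mpr ⟨i, hi, Or.inl rfl⟩, ?_⟩
      simp [ee, Sym2.mk_isDiag_iff]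
    · intro e he f hf hef v hv hv'
      simp only [Finset.mem_image, Finset.mem_range] at he hf
      obtain ⟨i, hi, rfl⟩ := he
      obtain ⟨j, hj, rfl⟩ := hf
      have hij : i ≠ j := fun h => hef (by rw [h])
      simp only [ee, Sym2.mem_iff] at hv hv'
      omega
    · rw [Finset.card_image_of_injective]
      · simp
      · intro a b hab
        simp only [ee, Sym2.eq_iff] at hab
        omega
  · -- the main competitive-ratio bound
    intro hM
    classical
    set S := outputEdges A (adv A m) with hS
    set a := ((Finset.range m).filter (fun i => acc A i = true)).card with ha
    -- S is contained in the accepted ee's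
    have hSsub : S ⊆ ((Finset.range m).filter (fun i => acc A i = true)).image ee := by
      intro x hx
      obtain ⟨i, hAi, hgi⟩ := mem_output_iff.mp hx
      have hxmem : x ∈ adv A m := hgi ▸ List.get_mem (adv A m) i
      rcases mem_adv.mp hxmem with ⟨j, hj, h⟩
      rcases h with rfl | ⟨hacc, h⟩
      · -- x = ee j; show it was accepted at its unique position
        obtain ⟨htake, hget⟩ := take_get (A := A) hj
        have : i = ⟨(adv A j).length, length_lt hj⟩ :=
          ((nodup_adv A m).get_inj_iff).mp (by rw [hgi, hget])
        subst this
        rw [htake] at hAi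
        simp only [Finset.mem_image, Finset.mem_filter, Finset.mem_range]
        exact ⟨j, ⟨hj, hAi⟩, rfl⟩
      · -- x = ff j or gg j: conflicts with ee j ∈ S, contradicting the matching property
        exfalso
        have heeS : ee j ∈ S := ee_mem_output hj hacc
        have hxS : x ∈ S := hx
        rcases h with rfl | rfl
        · have hne : ee j ≠ ff j := by simp only [ne_eq, ee, ff, Sym2.eq_iff]; omega
          exact hM.2 (ee j) heeS (ff j) hxS hne (6*j) (by simp [ee, Sym2.mem_iff])
            (by simp [ff, Sym2.mem_iff])
        · have hne : ee j ≠ gg j := by simp only [ne_eq, ee, gg, Sym2.eq_iff]; omega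
          exact hM.2 (ee j) heeS (gg j) hxS hne (6*j+1) (by simp [ee, Sym2.mem_iff])
            (by simp [gg, Sym2.mem_iff])
    have hScard : S.card ≤ a := le_trans (Finset.card_le_card hSsub) Finset.card_image_le
    have ham : a ≤ m := le_trans (Finset.card_filter_le _ _) (by simp)
    -- the big matching
    set blk : ℕ → Finset (Sym2 ℕ) := fun i => if acc A i = true then {ff i, gg i} else {ee i}
      with hblk
    have blk_mem : ∀ i, ∀ e ∈ blk i, (6*i ∈ e ∨ 6*i+1 ∈ e) ∧ ∀ v ∈ e, 6*i ≤ v ∧ v < 6*i+4 := by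
      intro i e he
      simp only [hblk] at he
      split at he <;> simp only [Finset.mem_insert, Finset.mem_singleton] at he
      · rcases he with rfl | rfl
        · refine ⟨Or.inl ?_, ?_⟩
          · simp [ff, Sym2.mem_iff]
          · intro v hv; simp only [ff, Sym2.mem_iff] at hv; omega
        · refine ⟨Or.inr ?_, ?_⟩
          · simp [gg, Sym2.mem_iff]
          · intro v hv; simp only [gg, Sym2.mem_iff] at hv; omega
      · subst he
        refine ⟨Or.inl ?_, ?_⟩
        · simp [ee, Sym2.mem_iff]
        · intro v hv; simp only [ee, Sym2.mem_iff] at hv; omega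
    have blk_edge : ∀ i < m, ∀ e ∈ blk i, e ∈ adv A m := by
      intro i hi e he
      simp only [hblk] at he
      split at he <;> simp only [Finset.mem_insert, Finset.mem_singleton] at he
      · rename_i hc
        rcases he with rfl | rfl
        · exact mem_adv.mpr ⟨i, hi, Or.inr ⟨hc, Or.inl rfl⟩⟩
        · exact mem_adv.mpr ⟨i, hi, Or.inr ⟨hc, Or.inr rfl⟩⟩
      · subst he; exact mem_adv.mpr ⟨i, hi, Or.inl rfl⟩
    have blk_disj : ∀ x ∈ Finset.range m, ∀ y ∈ Finset.range m, x ≠ y →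
        Disjoint (blk x) (blk y) := by
      intro x _ y _ hxy
      rw [Finset.disjoint_left]
      intro e hex hey
      obtain ⟨h1, h2⟩ := blk_mem x e hex
      obtain ⟨_, h4⟩ := blk_mem y e hey
      rcases h1 with h | h <;> [have := h4 _ h; have := h4 _ h] <;>
        [have := h2 _ h; have := h2 _ h] <;> omega
    refine ⟨(Finset.range m).biUnion blk, ⟨?_, ?_⟩, ?_⟩
    · intro e he
      simp only [Finset.mem_biUnion, Finset.mem_range] at he
      obtain ⟨i, hi, he⟩ := he
      rw [edgeArrivalGraph, SimpleGraph.edgeSet_fromEdgeSet]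
      refine ⟨?_, ?_⟩
      · simp only [Finset.coe_sort_coe, Finset.mem_coe, List.mem_toFinset]
        exact blk_edge i hi e he
      have := blk_mem i e he
      simp only [hblk] at he
      split at he <;> simp only [Finset.mem_insert, Finset.mem_singleton] at he
      · rcases he with rfl | rfl <;> simp [ff, gg, Sym2.mk_isDiag_iff]
      · subst he; simp [ee, Sym2.mk_isDiag_iff]
    · intro e he f hf hef v hv hv'
      simp only [Finset.mem_biUnion, Finset.mem_range] at he hf
      obtain ⟨i, hi, he⟩ := he
      obtain ⟨j, hj, hf⟩ := hf
      by_cases hij : i = j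
      · subst hij
        -- same block: must both be in the {ff, gg} case
        simp only [hblk] at he hf
        by_cases hc : acc A i = true
        · rw [if_pos hc] at he hf
          simp only [Finset.mem_insert, Finset.mem_singleton] at he hf
          rcases he with rfl | rfl <;> rcases hf with rfl | rfl <;>
            first
              | exact hef rfl
              | (simp only [ff, gg, Sym2.mem_iff] at hv hv'; omega)
        · rw [if_neg hc] at he hf
          simp only [Finset.mem_singleton] at he hf
          subst he; subst hf; exact hef rfl
      · obtain ⟨_, h2⟩ := blk_mem i e he
        obtain ⟨_, h4⟩ := blk_mem j f hf
        have := h2 v hv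
        have := h4 v hv'
        omega
    · -- cardinality count
      rw [Finset.card_biUnion blk_disj]
      have hcard : ∀ i, (blk i).card = if acc A i = true then 2 else 1 := by
        intro i
        simp only [hblk]
        split
        · rw [Finset.card_insert_of_notMem (by simp only [Finset.mem_singleton, ff, gg, Sym2.eq_iff]; omega),
            Finset.card_singleton]
        · exact Finset.card_singleton _
      have e1 : ∑ i ∈ Finset.range m, ((if acc A i = true then 1 else 0) + 1) = a + m := by
        rw [Finset.sum_add_distrib, ← Finset.card_filter, Finset.sum_const,
          Finset.card_range, smul_eq_mul, mul_one, ha]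
      calc 2 * S.card ≤ a + m := by omega
        _ = ∑ i ∈ Finset.range m, ((if acc A i = true then 1 else 0) + 1) := e1.symm
        _ = ∑ i ∈ Finset.range m, (if acc A i = true then 2 else 1) :=
            Finset.sum_congr rfl fun i _ => by split <;> rfl
        _ = ∑ i ∈ Finset.range m, (blk i).card :=
            Finset.sum_congr rfl fun i _ => (hcard i).symm
end
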